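/- Let φ: ℝ → ℝ be a C^∞ transition function (φ(t) = 1 for t ≥ 1, φ(t) = −1 for t ≤ −1, φ'(t) > 0 for t ∈ (−1,1)), let U ⊆ ℝ^m be open, and let g₁, g₂: ℝ^m → ℝ be C^∞ functions with g₁(x)·g₂(x) < 0 for all x ∈ U. Then there exists a C^∞ function H: U → ℝ such that for every x ∈ U one has H(x) ∈ (−1,1) and (g₁(x)+g₂(x)) + φ(H(x))·(g₁(x)−g₂(x)) = 0, and H(x) is the unique number in (−1,1) with this property. In other words, the critical manifold {(x,ȳ) : (g₁(x)+g₂(x)) + φ(ȳ)(g₁(x)−g₂(x)) = 0, x ∈ U} is the graph of a smooth function ȳ = H(x). -/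

import Mathlib

open Set

/-- The critical manifold is the graph of a smooth function `ȳ = H x`: given a `C^∞`
transition function `φ` and `C^∞` functions `g₁ g₂` with `g₁·g₂ < 0` on an open set `U`,
there is a `C^∞` function `H : U → ℝ` with `H x ∈ (−1,1)`,
`(g₁ x + g₂ x) + φ (H x)·(g₁ x − g₂ x) = 0`, and `H x` the unique such number in `(−1,1)`. -/
theorem stmt_3 (φ : ℝ → ℝ) (hφ : ContDiff ℝ (⊤ : ℕ∞) φ)
    (hφ1 : ∀ t : ℝ, 1 ≤ t → φ t = 1) (hφ2 : ∀ t : ℝ, t ≤ -1 → φ t = -1)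
    (hφ' : ∀ t ∈ Set.Ioo (-1 : ℝ) 1, 0 < deriv φ t)
    (m : ℕ) (U : Set (Fin m → ℝ)) (hU : IsOpen U)
    (g₁ g₂ : (Fin m → ℝ) → ℝ) (hg₁ : ContDiff ℝ (⊤ : ℕ∞) g₁) (hg₂ : ContDiff ℝ (⊤ : ℕ∞) g₂)
    (hneg : ∀ x ∈ U, g₁ x * g₂ x < 0) :
    ∃ H : (Fin m → ℝ) → ℝ, ContDiffOn ℝ (⊤ : ℕ∞) H U ∧
      ∀ x ∈ U, H x ∈ Set.Ioo (-1 : ℝ) 1 ∧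
        (g₁ x + g₂ x) + φ (H x) * (g₁ x - g₂ x) = 0 ∧
        ∀ y ∈ Set.Ioo (-1 : ℝ) 1,
          (g₁ x + g₂ x) + φ y * (g₁ x - g₂ x) = 0 → y = H x := by
  classical
  -- φ is strictly monotone on [-1,1]
  have hmono : StrictMonoOn φ (Icc (-1 : ℝ) 1) := by
    apply strictMonoOn_of_deriv_pos (convex_Icc _ _) hφ.continuous.continuousOn
    intro t ht
    rw [interior_Icc] at ht
    exact hφ' t ht
  -- surjectivity of φ onto (-1,1) from (-1,1)
  have hsurj : ∀ v ∈ Ioo (-1 : ℝ) 1, ∃ t ∈ Ioo (-1 : ℝ) 1, φ t = v := by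
    intro v hv
    have h1 : φ (-1) = -1 := hφ2 _ le_rfl
    have h2 : φ (1 : ℝ) = 1 := hφ1 _ le_rfl
    have := intermediate_value_Ioo (by norm_num : (-1:ℝ) ≤ 1) hφ.continuous.continuousOn
    rw [h1, h2] at this
    obtain ⟨t, ht, htv⟩ := this hv
    exact ⟨t, ht, htv⟩
  -- the inverse function ψ
  set ψ : ℝ → ℝ := fun y =>
    if h : ∃ t ∈ Ioo (-1 : ℝ) 1, φ t = y then h.choose else 0 with hψdef
  have hψ : ∀ v ∈ Ioo (-1 : ℝ) 1, ψ v ∈ Ioo (-1 : ℝ) 1 ∧ φ (ψ v) = v := by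
    intro v hv
    have h := hsurj v hv
    simp only [hψdef, dif_pos h]
    exact ⟨h.choose_spec.1, h.choose_spec.2⟩
  -- target value v x
  set v : (Fin m → ℝ) → ℝ := fun x => (g₁ x + g₂ x) / (g₂ x - g₁ x) with hvdef
  have hden : ∀ x ∈ U, g₂ x - g₁ x ≠ 0 := by
    intro x hx h
    have h2 := hneg x hx
    have h3 : g₂ x = g₁ x := by linarith
    rw [h3] at h2
    nlinarith [sq_nonneg (g₁ x)]
  have hvmem : ∀ x ∈ U, v x ∈ Ioo (-1 : ℝ) 1 := by
    intro x hx
    have h := hneg x hx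
    have hd := hden x hx
    rcases lt_or_gt_of_ne hd with hd' | hd'
    · constructor
      · rw [lt_div_iff_of_neg (by linarith)]; nlinarith
      · rw [div_lt_iff_of_neg (by linarith)]; nlinarith
    · constructor
      · rw [lt_div_iff₀ (by linarith)]; nlinarith
      · rw [div_lt_iff₀ (by linarith)]; nlinarith
  refine ⟨fun x => ψ (v x), ?_, ?_⟩
  · -- smoothness
    intro x₀ hx₀
    apply ContDiffAt.contDiffWithinAt
    have hv_cd : ContDiffAt ℝ (⊤ : ℕ∞) v x₀ := by
      exact (hg₁.contDiffAt.add hg₂.contDiffAt).div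
        (hg₂.contDiffAt.sub hg₁.contDiffAt) (hden x₀ hx₀)
    have hy₀ : v x₀ ∈ Ioo (-1 : ℝ) 1 := hvmem x₀ hx₀
    obtain ⟨ht₀, hφt₀⟩ := hψ (v x₀) hy₀
    set t₀ := ψ (v x₀)
    -- local inverse at t₀
    have hd : 0 < deriv φ t₀ := hφ' t₀ ht₀
    set E : ℝ ≃L[ℝ] ℝ := ContinuousLinearEquiv.unitsEquivAut ℝ (Units.mk0 _ hd.ne')
    have hder : HasFDerivAt φ (E : ℝ →L[ℝ] ℝ) t₀ := by
      have h1 : HasDerivAt φ (deriv φ t₀) t₀ :=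
        (hφ.differentiable (by simp) t₀).hasDerivAt
      have : (E : ℝ →L[ℝ] ℝ) = ContinuousLinearMap.smulRight (1 : ℝ →L[ℝ] ℝ) (deriv φ t₀) := by
        ext z
        simp [E, ContinuousLinearEquiv.unitsEquivAut_apply, mul_comm]
      rw [this]
      exact h1.hasFDerivAt
    have hφcd : ContDiffAt ℝ (⊤ : ℕ∞) φ t₀ := hφ.contDiffAt
    have hge : ((⊤ : ℕ∞) : WithTop ℕ∞) ≠ 0 := by simp
    set g := hφcd.localInverse hder hge with hgdef
    have hg_cd : ContDiffAt ℝ (⊤ : ℕ∞) g (φ t₀) := hφcd.to_localInverse hder hge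
    have hg_strict := hφcd.hasStrictFDerivAt' hder hge
    -- ψ = g eventually near φ t₀ = v x₀
    have hgψ : ψ =ᶠ[nhds (φ t₀)] g := by
      have h1 : ∀ᶠ y in nhds (φ t₀), φ (g y) = y := hg_strict.eventually_right_inverse
      have h2 : ∀ᶠ y in nhds (φ t₀), g y ∈ Ioo (-1 : ℝ) 1 := by
        have hc : ContinuousAt g (φ t₀) := hg_strict.localInverse_continuousAt
        have : g (φ t₀) = t₀ := hg_strict.localInverse_apply_image
        have := hc.preimage_mem_nhds (isOpen_Ioo.mem_nhds (this ▸ ht₀))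
        exact this
      have h3 : ∀ᶠ y in nhds (φ t₀), y ∈ Ioo (-1 : ℝ) 1 :=
        isOpen_Ioo.mem_nhds (hφt₀ ▸ hy₀)
      filter_upwards [h1, h2, h3] with y hy1 hy2 hy3
      obtain ⟨hψy, hφψy⟩ := hψ y hy3
      exact hmono.injOn (Ioo_subset_Icc_self hψy) (Ioo_subset_Icc_self hy2)
        (by rw [hφψy, hy1])
    have hψ_cd : ContDiffAt ℝ (⊤ : ℕ∞) ψ (v x₀) := by
      rw [← hφt₀]
      exact hg_cd.congr_of_eventuallyEq hgψ
    exact hψ_cd.comp x₀ hv_cd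
  · intro x hx
    have hy : v x ∈ Ioo (-1 : ℝ) 1 := hvmem x hx
    obtain ⟨hmem, hφval⟩ := hψ (v x) hy
    have hd := hden x hx
    refine ⟨hmem, ?_, ?_⟩
    · rw [hφval, hvdef]
      field_simp
      ring
    · intro y hy' heq
      have hφy : φ y = v x := by
        rw [hvdef]
        field_simp
        linarith [heq]
      exact hmono.injOn (Ioo_subset_Icc_self hy') (Ioo_subset_Icc_self hmem)
        (by rw [hφy, hφval])
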